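/- arXiv:math/0012097 — 4 statements merged into one kernel-verified Lean document; each statement's English description precedes it below -/
import Mathlib

section
/- Let 𝔞 be a real Lie algebra, 𝔤 ⊆ 𝔞 a Lie subalgebra, 𝔟 ⊆ 𝔞 and 𝔪_g ⊆ 𝔤 linear subspaces, 𝔩 ⊆ 𝔟 ∩ 𝔤 a linear subspace, and Z_a ∈ 𝔞, Z_g ∈ 𝔤 elements. Assume that 𝔤 = 𝔩 + ℝZ_g + 𝔪_g, that 𝔪_g ∩ (𝔟 + ℝZ_a) = {0}, and that Z_g ∈ 𝔟 + ℝZ_a. Then (𝔟 + ℝZ_a) ∩ 𝔤 = 𝔩 + ℝZ_g. If in addition C_𝔞(Z_a) = 𝔟 + ℝZ_a and C_𝔤(Z_g) = 𝔩 + ℝZ_g, then {X ∈ 𝔤 : ⁅X, Z_a⁆ = 0} = C_𝔤(Z_g) = 𝔩 + ℝZ_g. -/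
/-- Let 𝔞 be a real Lie algebra, 𝔤 ⊆ 𝔞 a Lie subalgebra, 𝔟 ⊆ 𝔞 and
𝔪_g ⊆ 𝔤 linear subspaces, 𝔩 ⊆ 𝔟 ∩ 𝔤 a linear subspace, and Zₐ ∈ 𝔞, Z_g ∈ 𝔤.
Assume 𝔤 = 𝔩 + ℝZ_g + 𝔪_g, 𝔪_g ∩ (𝔟 + ℝZₐ) = 0, and Z_g ∈ 𝔟 + ℝZₐ.
Then (𝔟 + ℝZₐ) ∩ 𝔤 = 𝔩 + ℝZ_g.  If moreover C_𝔞(Zₐ) = 𝔟 + ℝZₐ and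
C_𝔤(Z_g) = 𝔩 + ℝZ_g, then {X ∈ 𝔤 : ⁅X, Zₐ⁆ = 0} = C_𝔤(Z_g) = 𝔩 + ℝZ_g. -/
theorem stmt2 {a : Type*} [LieRing a] [LieAlgebra ℝ a]
    (g : LieSubalgebra ℝ a)
    (b mg l : Submodule ℝ a)
    (hmg : mg ≤ g.toSubmodule)
    (hlb : l ≤ b) (hlg : l ≤ g.toSubmodule)
    (Za Zg : a) (hZgg : Zg ∈ g)
    (hdec : g.toSubmodule = l ⊔ Submodule.span ℝ {Zg} ⊔ mg)
    (hdisj : mg ⊓ (b ⊔ Submodule.span ℝ {Za}) = ⊥)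
    (hZgin : Zg ∈ b ⊔ Submodule.span ℝ {Za}) :
    -- (𝔟 + ℝZₐ) ∩ 𝔤 = 𝔩 + ℝZ_g
    ((b ⊔ Submodule.span ℝ {Za}) ⊓ g.toSubmodule = l ⊔ Submodule.span ℝ {Zg}) ∧
    -- if moreover C_𝔞(Zₐ) = 𝔟 + ℝZₐ and C_𝔤(Z_g) = 𝔩 + ℝZ_g, then
    -- C_𝔤(Zₐ) = C_𝔤(Z_g) = 𝔩 + ℝZ_g
    (({X : a | ⁅X, Za⁆ = 0} = ↑(b ⊔ Submodule.span ℝ {Za})) →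
      ({X : a | X ∈ g ∧ ⁅X, Zg⁆ = 0} = ↑(l ⊔ Submodule.span ℝ {Zg})) →
      ({X : a | X ∈ g ∧ ⁅X, Za⁆ = 0} = {X : a | X ∈ g ∧ ⁅X, Zg⁆ = 0} ∧
        {X : a | X ∈ g ∧ ⁅X, Za⁆ = 0} = ↑(l ⊔ Submodule.span ℝ {Zg}))) := by
  have hpart1 : (b ⊔ Submodule.span ℝ {Za}) ⊓ g.toSubmodule
      = l ⊔ Submodule.span ℝ {Zg} := by
    apply le_antisymm
    · intro X hX
      obtain ⟨hX1, hX2⟩ := hX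
      rw [hdec] at hX2
      obtain ⟨y, hy, m, hm, rfl⟩ := Submodule.mem_sup.mp hX2
      have hy' : y ∈ b ⊔ Submodule.span ℝ {Za} := by
        have hsub : l ⊔ Submodule.span ℝ {Zg} ≤ b ⊔ Submodule.span ℝ {Za} := by
          refine sup_le (hlb.trans le_sup_left) ?_
          rw [Submodule.span_le]
          exact Set.singleton_subset_iff.mpr hZgin
        exact hsub hy
      have hm' : m ∈ b ⊔ Submodule.span ℝ {Za} := by
        have hme : m = (y + m) - y := by abel
        rw [hme]
        exact Submodule.sub_mem _ hX1 hy'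
      have hm0 : m = 0 := by
        have : m ∈ mg ⊓ (b ⊔ Submodule.span ℝ {Za}) :=
          Submodule.mem_inf.mpr ⟨hm, hm'⟩
        rw [hdisj] at this
        exact this
      rw [hm0, add_zero]
      exact hy
    · refine sup_le (le_inf (hlb.trans le_sup_left) hlg) ?_
      rw [Submodule.span_le]
      exact Set.singleton_subset_iff.mpr ⟨hZgin, hZgg⟩
  refine ⟨hpart1, fun hCa hCg => ?_⟩
  have key : {X : a | X ∈ g ∧ ⁅X, Za⁆ = 0} = ↑(l ⊔ Submodule.span ℝ {Zg}) := by
    ext X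
    simp only [Set.mem_setOf_eq, SetLike.mem_coe]
    constructor
    · rintro ⟨h1, h2⟩
      have hX : X ∈ b ⊔ Submodule.span ℝ {Za} := by
        have := (Set.ext_iff.mp hCa X).mp h2
        exact this
      rw [← hpart1]
      exact ⟨hX, h1⟩
    · intro h
      have h' : X ∈ (b ⊔ Submodule.span ℝ {Za}) ⊓ g.toSubmodule := hpart1 ▸ h
      refine ⟨h'.2, ?_⟩
      exact (Set.ext_iff.mp hCa X).mpr h'.1
  exact ⟨key.trans hCg.symm, key⟩
end

section
/- Let 𝔞 be a Lie algebra over a field, let 𝔤 ⊆ 𝔞 and 𝔟 ⊆ 𝔞 be Lie subalgebras, let 𝔩 ⊆ 𝔤 ∩ 𝔟 be a linear subspace, let 𝔪_g ⊆ 𝔤 and 𝔪_a ⊆ 𝔞 be linear subspaces, and let Z_g ∈ 𝔤, W ∈ 𝔟, and set Z_a := Z_g + W. Assume: (i) ⁅Z_a, X⁆ = 0 for all X ∈ 𝔟; (ii) 𝔟 + 𝔪_a is a Lie subalgebra of 𝔞; (iii) 𝔩 + 𝔪_g ⊆ 𝔟 + 𝔪_a; (iv) 𝔪_a ⊆ 𝔪_g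 + 𝔟; (v) (𝔟 + 𝔪_a) ∩ 𝔤 = 𝔩 + 𝔪_g. Then ⁅Z_g, 𝔪_g⁆ ⊆ 𝔩 + 𝔪_g if and only if ⁅Z_a, 𝔪_a⁆ ⊆ 𝔟 + 𝔪_a. -/
/-- Let 𝔞 be a Lie algebra over a field, 𝔤, 𝔟 ⊆ 𝔞 Lie subalgebras,
𝔩 ⊆ 𝔤 ∩ 𝔟 a linear subspace, 𝔪_g ⊆ 𝔤 and 𝔪ₐ ⊆ 𝔞 linear subspaces, Z_g ∈ 𝔤, W ∈ 𝔟 and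
Zₐ := Z_g + W.  Assume (i) ⁅Zₐ, 𝔟⁆ = 0; (ii) 𝔟 + 𝔪ₐ is a Lie subalgebra of 𝔞;
(iii) 𝔩 + 𝔪_g ⊆ 𝔟 + 𝔪ₐ; (iv) 𝔪ₐ ⊆ 𝔪_g + 𝔟; (v) (𝔟 + 𝔪ₐ) ∩ 𝔤 = 𝔩 + 𝔪_g.
Then ⁅Z_g, 𝔪_g⁆ ⊆ 𝔩 + 𝔪_g if and only if ⁅Zₐ, 𝔪ₐ⁆ ⊆ 𝔟 + 𝔪ₐ. -/
theorem stmt3 {K a : Type*} [Field K] [LieRing a] [LieAlgebra K a]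
    (g b : LieSubalgebra K a)
    (l mg ma : Submodule K a)
    (hl : l ≤ g.toSubmodule ⊓ b.toSubmodule)
    (hmg : mg ≤ g.toSubmodule)
    (Zg W : a) (hZg : Zg ∈ g) (hW : W ∈ b)
    (Za : a) (hZa : Za = Zg + W)
    -- (i) ⁅Zₐ, X⁆ = 0 for all X ∈ 𝔟
    (h1 : ∀ X ∈ b, ⁅Za, X⁆ = 0)
    -- (ii) 𝔟 + 𝔪ₐ is a Lie subalgebra of 𝔞
    (h2 : ∀ X ∈ b.toSubmodule ⊔ ma, ∀ Y ∈ b.toSubmodule ⊔ ma,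
      ⁅X, Y⁆ ∈ b.toSubmodule ⊔ ma)
    -- (iii) 𝔩 + 𝔪_g ⊆ 𝔟 + 𝔪ₐ
    (h3 : l ⊔ mg ≤ b.toSubmodule ⊔ ma)
    -- (iv) 𝔪ₐ ⊆ 𝔪_g + 𝔟
    (h4 : ma ≤ mg ⊔ b.toSubmodule)
    -- (v) (𝔟 + 𝔪ₐ) ∩ 𝔤 = 𝔩 + 𝔪_g
    (h5 : (b.toSubmodule ⊔ ma) ⊓ g.toSubmodule = l ⊔ mg) :
    (∀ X ∈ mg, ⁅Zg, X⁆ ∈ l ⊔ mg) ↔ (∀ X ∈ ma, ⁅Za, X⁆ ∈ b.toSubmodule ⊔ ma) := by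
  have hmgBA : mg ≤ b.toSubmodule ⊔ ma := le_trans le_sup_right h3
  have hWBA : W ∈ b.toSubmodule ⊔ ma := Submodule.mem_sup_left hW
  constructor
  · intro h X hX
    obtain ⟨Xg, hXg, Xb, hXb, rfl⟩ := Submodule.mem_sup.mp (h4 hX)
    have e1 : ⁅Za, Xg + Xb⁆ = ⁅Zg, Xg⁆ + ⁅W, Xg⁆ + ⁅Za, Xb⁆ := by
      rw [hZa]; simp only [lie_add, add_lie]
    rw [e1, h1 Xb hXb, add_zero]
    exact Submodule.add_mem _ (h3 (h Xg hXg))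
      (h2 W hWBA Xg (hmgBA hXg))
  · intro h X hX
    have hXBA : X ∈ b.toSubmodule ⊔ ma := hmgBA hX
    obtain ⟨Xb, hXb, Xa, hXa, hXeq⟩ := Submodule.mem_sup.mp hXBA
    have hZaX : ⁅Za, X⁆ ∈ b.toSubmodule ⊔ ma := by
      rw [← hXeq, lie_add, h1 Xb hXb, zero_add]
      exact h Xa hXa
    have e2 : ⁅Zg, X⁆ = ⁅Za, X⁆ - ⁅W, X⁆ := by rw [hZa]; simp [add_lie]
    rw [← h5]
    refine ⟨?_, g.lie_mem hZg (hmg hX)⟩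
    rw [e2]
    exact Submodule.sub_mem _ hZaX (h2 W hWBA X hXBA)
end

section
/- Let 𝔞 be a real Lie algebra with an ad-invariant symmetric bilinear form B_a, let 𝔤 ⊆ 𝔞 be a Lie subalgebra with an ad-invariant symmetric bilinear form B_g on 𝔤, let 𝔠 ⊆ 𝔞 be a Lie subalgebra, and set 𝔨 := 𝔠 ∩ 𝔤. Let Z_a ∈ Z(𝔠) and Z_g ∈ Z(𝔨), and assume 𝔨 = ⁅𝔨,𝔨⁆ + Z(𝔨). Define 𝔩 := {X ∈ 𝔨 : B_g(X, Z_g) = 0} and 𝔟 := {X ∈ 𝔠 : B_a(X, Z_a) = 0}. Then 𝔩 = 𝔟 ∩ 𝔤 if and only if Z(𝔨) ∩ {X ∈ 𝔤 : B_g(X, Z_g) = 0} = Z(𝔨) ∩ {X ∈ 𝔞 : B_a(X, Z_a) = 0}. -/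
/-- Let 𝔞 be a real Lie algebra with an ad-invariant symmetric bilinear
form `Bₐ`, 𝔤 ⊆ 𝔞 a Lie subalgebra with an ad-invariant symmetric bilinear form `B_g`
(on 𝔤), 𝔠 ⊆ 𝔞 a Lie subalgebra, 𝔨 := 𝔠 ∩ 𝔤.  Let Zₐ ∈ Z(𝔠), Z_g ∈ Z(𝔨), and assume
𝔨 = ⁅𝔨,𝔨⁆ + Z(𝔨).  Define 𝔩 := {X ∈ 𝔨 : B_g(X, Z_g) = 0} and
𝔟 := {X ∈ 𝔠 : Bₐ(X, Zₐ) = 0}.  Then 𝔩 = 𝔟 ∩ 𝔤 if and only if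
Z(𝔨) ∩ {X ∈ 𝔤 : B_g(X, Z_g) = 0} = Z(𝔨) ∩ {X ∈ 𝔞 : Bₐ(X, Zₐ) = 0}. -/
theorem stmt5 {a : Type*} [LieRing a] [LieAlgebra ℝ a]
    (Ba Bg : LinearMap.BilinForm ℝ a)
    -- Bₐ is a symmetric ad-invariant bilinear form on 𝔞
    (hBasymm : ∀ X Y : a, Ba X Y = Ba Y X)
    (hBainv : ∀ X Y W : a, Ba ⁅X, Y⁆ W = Ba X ⁅Y, W⁆)
    (g c : LieSubalgebra ℝ a)
    -- B_g is a symmetric ad-invariant bilinear form on 𝔤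
    (hBgsymm : ∀ X ∈ g, ∀ Y ∈ g, Bg X Y = Bg Y X)
    (hBginv : ∀ X ∈ g, ∀ Y ∈ g, ∀ W ∈ g, Bg ⁅X, Y⁆ W = Bg X ⁅Y, W⁆)
    -- 𝔨 = 𝔠 ∩ 𝔤
    (k : Set a) (hk : k = {X : a | X ∈ c ∧ X ∈ g})
    -- Zₐ ∈ Z(𝔠), Z_g ∈ Z(𝔨)
    (Za Zg : a)
    (hZa : Za ∈ c ∧ ∀ X ∈ c, ⁅Za, X⁆ = 0)
    (hZg : Zg ∈ k ∧ ∀ X ∈ k, ⁅Zg, X⁆ = 0)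
    -- the derived subalgebra ⁅𝔨,𝔨⁆ and the center Z(𝔨) of 𝔨
    (derived : Submodule ℝ a)
    (hder : derived = Submodule.span ℝ {X : a | ∃ Y ∈ k, ∃ V ∈ k, X = ⁅Y, V⁆})
    (centerk : Set a)
    (hcen : centerk = {X : a | X ∈ k ∧ ∀ Y ∈ k, ⁅X, Y⁆ = 0})
    -- 𝔨 = ⁅𝔨,𝔨⁆ + Z(𝔨)
    (hred : ∀ X ∈ k, ∃ D ∈ derived, ∃ C ∈ centerk, X = D + C)
    -- 𝔩 and 𝔟
    (l bb : Set a)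
    (hl : l = {X : a | X ∈ k ∧ Bg X Zg = 0})
    (hb : bb = {X : a | X ∈ c ∧ Ba X Za = 0}) :
    l = bb ∩ {X : a | X ∈ g} ↔
      centerk ∩ {X : a | X ∈ g ∧ Bg X Zg = 0} =
        centerk ∩ {X : a | Ba X Za = 0} := by

  obtain ⟨hZgk, hZgcen⟩ := hZg
  obtain ⟨hZac, hZacen⟩ := hZa
  have hZgg : Zg ∈ g := (hk ▸ hZgk).2
  -- derived is orthogonal to Zg w.r.t. Bg and to Za w.r.t. Ba
  have hspanBg : derived ≤ LinearMap.ker (Bg.flip Zg) := by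
    rw [hder, Submodule.span_le]
    rintro X ⟨Y, hY, V, hV, rfl⟩
    have hYg : Y ∈ g := (hk ▸ hY).2
    have hVg : V ∈ g := (hk ▸ hV).2
    have h0 : ⁅V, Zg⁆ = (0 : a) := by
      rw [← neg_eq_zero, lie_skew, hZgcen V hV]
    have : Bg ⁅Y, V⁆ Zg = 0 := by
      rw [hBginv Y hYg V hVg Zg hZgg, h0, map_zero]
    exact LinearMap.mem_ker.mpr this
  have hspanBa : derived ≤ LinearMap.ker (Ba.flip Za) := by
    rw [hder, Submodule.span_le]
    rintro X ⟨Y, hY, V, hV, rfl⟩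
    have hVc : V ∈ c := (hk ▸ hV).1
    have h0 : ⁅V, Za⁆ = (0 : a) := by
      rw [← neg_eq_zero, lie_skew, hZacen V hVc]
    have : Ba ⁅Y, V⁆ Za = 0 := by
      rw [hBainv, h0, map_zero]
    exact LinearMap.mem_ker.mpr this
  constructor
  · intro h
    ext X
    constructor
    · rintro ⟨hXcen, _, hBgX⟩
      refine ⟨hXcen, ?_⟩
      have hXk : X ∈ k := (hcen ▸ hXcen).1
      have : X ∈ l := hl ▸ ⟨hXk, hBgX⟩
      rw [h] at this
      exact ((hb ▸ this.1 : X ∈ {X : a | X ∈ c ∧ Ba X Za = 0})).2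
    · rintro ⟨hXcen, hBaX⟩
      have hXk : X ∈ k := (hcen ▸ hXcen).1
      have hXcg := hk ▸ hXk
      have : X ∈ bb ∩ {X : a | X ∈ g} := ⟨hb ▸ ⟨hXcg.1, hBaX⟩, hXcg.2⟩
      rw [← h, hl] at this
      exact ⟨hXcen, hXcg.2, this.2⟩
  · intro h
    ext X
    constructor
    · intro hX
      rw [hl] at hX
      obtain ⟨hXk, hBgX⟩ := hX
      have hXcg := hk ▸ hXk
      obtain ⟨D, hD, C, hC, hXDC⟩ := hred X hXk
      have hD0 : Bg D Zg = 0 := hspanBg hD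
      have hBgC : Bg C Zg = 0 := by
        rw [hXDC, map_add, LinearMap.add_apply, hD0, zero_add] at hBgX
        exact hBgX
      have hCk : C ∈ k := (hcen ▸ hC).1
      have hCcg := hk ▸ hCk
      have hCmem : C ∈ centerk ∩ {X : a | X ∈ g ∧ Bg X Zg = 0} :=
        ⟨hC, hCcg.2, hBgC⟩
      rw [h] at hCmem
      have hBaC : Ba C Za = 0 := hCmem.2
      have hBaD : Ba D Za = 0 := hspanBa hD
      have hBaX : Ba X Za = 0 := by
        rw [hXDC, map_add, LinearMap.add_apply, hBaD, hBaC, zero_add]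
      exact ⟨hb ▸ ⟨hXcg.1, hBaX⟩, hXcg.2⟩
    · rintro ⟨hXbb, hXg⟩
      rw [hb] at hXbb
      obtain ⟨hXc, hBaX⟩ := hXbb
      have hXk : X ∈ k := hk ▸ ⟨hXc, hXg⟩
      obtain ⟨D, hD, C, hC, hXDC⟩ := hred X hXk
      have hBaD : Ba D Za = 0 := hspanBa hD
      have hBaC : Ba C Za = 0 := by
        rw [hXDC, map_add, LinearMap.add_apply, hBaD, zero_add] at hBaX
        exact hBaX
      have hCmem : C ∈ centerk ∩ {X : a | Ba X Za = 0} := ⟨hC, hBaC⟩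
      rw [← h] at hCmem
      have hBgC : Bg C Zg = 0 := hCmem.2.2
      have hBgD : Bg D Zg = 0 := hspanBg hD
      have hBgX : Bg X Zg = 0 := by
        rw [hXDC, map_add, LinearMap.add_apply, hBgD, hBgC, zero_add]
      exact hl ▸ ⟨hXk, hBgX⟩
end

section
/- Let 𝔞 be a finite-dimensional real Lie algebra which is an internal direct sum 𝔞 = 𝔰 ⊕ ℝξ, where 𝔰 is a Lie subalgebra and ξ is a central element of 𝔞, and let B be an ad-invariant inner product on 𝔞 with B(𝔰, ξ) = 0 and B(ξ, ξ) = 1. Let 𝔟 ⊆ 𝔰 be a Lie subalgebra and Z ∈ 𝔰 with B(Z, Z) = 1, B(Z, X) = 0 for all X ∈ 𝔟, and C_𝔰(Z) = 𝔟 ⊕ ℝZ. Set 𝔟̃ := 𝔟 + ℝ(Z − ξ) and Z̃ := Z + ξ. Then: (1) 𝔟̃ is a Lie subalgebra of 𝔞; (2) B(Z̃, X) = 0 for all X ∈ 𝔟̃; (3) C_𝔞(Z̃) = 𝔟̃ ⊕ ℝZ̃; and (4) 𝔰 ∩ 𝔟̃ = 𝔟. -/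
/-- Let 𝔞 = 𝔰 ⊕ ℝξ be a finite-dimensional real Lie algebra, where 𝔰 is
a Lie subalgebra and ξ is central, and let `B` be an ad-invariant inner product with
B(𝔰, ξ) = 0 and B(ξ, ξ) = 1.  Let 𝔟 ⊆ 𝔰 be a Lie subalgebra and Z ∈ 𝔰 with B(Z,Z) = 1,
B(Z, 𝔟) = 0 and C_𝔰(Z) = 𝔟 ⊕ ℝZ.  Set 𝔟̃ := 𝔟 + ℝ(Z − ξ) and Z̃ := Z + ξ.  Then:
(1) 𝔟̃ is a Lie subalgebra of 𝔞; (2) B(Z̃, 𝔟̃) = 0; (3) C_𝔞(Z̃) = 𝔟̃ ⊕ ℝZ̃;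
(4) 𝔰 ∩ 𝔟̃ = 𝔟. -/
theorem stmt8 {a : Type*} [LieRing a] [LieAlgebra ℝ a] [FiniteDimensional ℝ a]
    (s : LieSubalgebra ℝ a) (ξ : a)
    -- ξ is a central element of 𝔞
    (hcent : ∀ X : a, ⁅ξ, X⁆ = 0)
    -- 𝔞 = 𝔰 ⊕ ℝξ (internal direct sum)
    (hsum : s.toSubmodule ⊔ Submodule.span ℝ {ξ} = ⊤)
    (hdisj : s.toSubmodule ⊓ Submodule.span ℝ {ξ} = ⊥)
    -- B is an ad-invariant inner product on 𝔞
    (B : LinearMap.BilinForm ℝ a)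
    (hsymm : ∀ X Y : a, B X Y = B Y X)
    (hpos : ∀ X : a, X ≠ 0 → 0 < B X X)
    (hinv : ∀ X Y W : a, B ⁅X, Y⁆ W = B X ⁅Y, W⁆)
    (hBsξ : ∀ X ∈ s, B X ξ = 0) (hBξξ : B ξ ξ = 1)
    -- 𝔟 ⊆ 𝔰 is a Lie subalgebra, Z ∈ 𝔰, B(Z,Z) = 1, B(Z, 𝔟) = 0, C_𝔰(Z) = 𝔟 ⊕ ℝZ
    (b : LieSubalgebra ℝ a) (hbs : b ≤ s)
    (Z : a) (hZs : Z ∈ s) (hBZZ : B Z Z = 1) (hBZb : ∀ X ∈ b, B Z X = 0)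
    (hCs : {X : a | X ∈ s ∧ ⁅X, Z⁆ = 0} = {X : a | ∃ Y ∈ b, ∃ c : ℝ, X = Y + c • Z})
    -- 𝔟̃ := 𝔟 + ℝ(Z − ξ) and Z̃ := Z + ξ
    (btilde : Submodule ℝ a)
    (hbt : btilde = b.toSubmodule ⊔ Submodule.span ℝ {Z - ξ})
    (Zt : a) (hZt : Zt = Z + ξ) :
    -- (1) 𝔟̃ is a Lie subalgebra of 𝔞
    (∀ X ∈ btilde, ∀ Y ∈ btilde, ⁅X, Y⁆ ∈ btilde) ∧
    -- (2) B(Z̃, X) = 0 for all X ∈ 𝔟̃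
    (∀ X ∈ btilde, B Zt X = 0) ∧
    -- (3) C_𝔞(Z̃) = 𝔟̃ ⊕ ℝZ̃
    ({X : a | ⁅X, Zt⁆ = 0} = ↑(btilde ⊔ Submodule.span ℝ {Zt})) ∧
    (btilde ⊓ Submodule.span ℝ {Zt} = ⊥) ∧
    -- (4) 𝔰 ∩ 𝔟̃ = 𝔟
    (s.toSubmodule ⊓ btilde = b.toSubmodule) := by
  subst hbt hZt
  have hξne : ξ ≠ 0 := by
    intro h; rw [h] at hBξξ; simp at hBξξ
  have hcent' : ∀ X : a, ⁅X, ξ⁆ = 0 := fun X => by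
    rw [← lie_skew, hcent, neg_zero]
  have hmem : ∀ X : a, X ∈ b.toSubmodule ⊔ Submodule.span ℝ {Z - ξ} ↔
      ∃ Y ∈ b, ∃ c : ℝ, X = Y + c • (Z - ξ) := by
    intro X
    rw [Submodule.mem_sup]
    constructor
    · rintro ⟨y, hy, z, hz, rfl⟩
      rw [Submodule.mem_span_singleton] at hz
      obtain ⟨c, rfl⟩ := hz
      exact ⟨y, hy, c, rfl⟩
    · rintro ⟨Y, hY, c, rfl⟩
      exact ⟨Y, hY, c • (Z - ξ),
        Submodule.smul_mem _ _ (Submodule.mem_span_singleton_self _), rfl⟩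
  have hbZ : ∀ Y, Y ∈ b → ⁅Y, Z⁆ = 0 := by
    intro Y hY
    have h1 : Y ∈ {X : a | ∃ Y ∈ b, ∃ c : ℝ, X = Y + c • Z} :=
      ⟨Y, hY, 0, by simp⟩
    rw [← hCs] at h1
    exact h1.2
  have hBZξ : B Z ξ = 0 := hBsξ Z hZs
  have hBξZ : B ξ Z = 0 := by rw [hsymm]; exact hBZξ
  -- (2)
  have claim2 : ∀ X ∈ b.toSubmodule ⊔ Submodule.span ℝ {Z - ξ}, B (Z + ξ) X = 0 := by
    intro X hX
    obtain ⟨Y, hY, c, rfl⟩ := (hmem X).mp hX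
    have hBZY : B Z Y = 0 := hBZb Y hY
    have hBξY : B ξ Y = 0 := by rw [hsymm]; exact hBsξ Y (hbs hY)
    simp [map_add, map_smul, hBZY, hBξY, hBZZ, hBZξ, hBξZ, hBξξ, smul_eq_mul]
  refine ⟨?_, claim2, ?_, ?_, ?_⟩
  -- (1)
  · intro X hX Y hY
    obtain ⟨X₀, hX₀, c, rfl⟩ := (hmem X).mp hX
    obtain ⟨Y₀, hY₀, d, rfl⟩ := (hmem Y).mp hY
    have key : ⁅X₀ + c • (Z - ξ), Y₀ + d • (Z - ξ)⁆ = ⁅X₀, Y₀⁆ := by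
      have h1 : ⁅X₀, Z⁆ = 0 := hbZ X₀ hX₀
      have h2 : ⁅Y₀, Z⁆ = 0 := hbZ Y₀ hY₀
      have h3 : ⁅Z, Y₀⁆ = 0 := by rw [← lie_skew, h2, neg_zero]
      simp [lie_add, add_lie, lie_smul, smul_lie, lie_sub, sub_lie, h1, h2, h3,
        hcent, hcent']
    rw [key]
    exact (hmem _).mpr ⟨⁅X₀, Y₀⁆, b.lie_mem hX₀ hY₀, 0, by simp⟩
  -- (3) equality
  · ext X
    simp only [Set.mem_setOf_eq, SetLike.mem_coe]
    constructor
    · intro hXc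
      -- decompose X = S + t ξ
      have hXtop : X ∈ s.toSubmodule ⊔ Submodule.span ℝ {ξ} := by
        rw [hsum]; trivial
      obtain ⟨S, hS, w, hw, rfl⟩ := Submodule.mem_sup.mp hXtop
      obtain ⟨t, rfl⟩ := Submodule.mem_span_singleton.mp hw
      have hSZ : ⁅S, Z⁆ = 0 := by
        have : ⁅S + t • ξ, Z + ξ⁆ = ⁅S, Z⁆ := by
          simp [add_lie, lie_add, smul_lie, hcent, hcent']
        rw [this] at hXc; exact hXc
      have hSmem : S ∈ {X : a | ∃ Y ∈ b, ∃ c : ℝ, X = Y + c • Z} := by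
        rw [← hCs]; exact ⟨hS, hSZ⟩
      obtain ⟨Y, hY, c, rfl⟩ := hSmem
      have hdecomp : Y + c • Z + t • ξ =
          (Y + ((c - t) / 2) • (Z - ξ)) + ((c + t) / 2) • (Z + ξ) := by
        rw [smul_sub, smul_add]
        ring_nf
        module
      rw [hdecomp]
      exact Submodule.add_mem_sup ((hmem _).mpr ⟨Y, hY, _, rfl⟩)
        (Submodule.smul_mem _ _ (Submodule.mem_span_singleton_self _))
    · intro hX
      obtain ⟨u, hu, w, hw, rfl⟩ := Submodule.mem_sup.mp hX
      obtain ⟨β, rfl⟩ := Submodule.mem_span_singleton.mp hw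
      obtain ⟨Y, hY, c, rfl⟩ := (hmem u).mp hu
      have h1 : ⁅Y, Z⁆ = 0 := hbZ Y hY
      simp [add_lie, lie_add, smul_lie, lie_smul, sub_lie, lie_sub, h1, hcent, hcent']
  -- (3) disjointness
  · rw [Submodule.eq_bot_iff]
    rintro X ⟨hX1, hX2⟩
    obtain ⟨β, rfl⟩ := Submodule.mem_span_singleton.mp hX2
    have h0 : B (Z + ξ) (β • (Z + ξ)) = 0 := claim2 _ hX1
    have h2 : B (Z + ξ) (β • (Z + ξ)) = β * 2 := by
      simp [map_add, map_smul, hBZZ, hBZξ, hBξZ, hBξξ, smul_eq_mul]; ring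
    rw [h2] at h0
    have : β = 0 := by linarith
    simp [this]
  -- (4)
  · apply le_antisymm
    · rintro X ⟨hXs, hXb⟩
      obtain ⟨Y, hY, α, rfl⟩ := (hmem X).mp hXb
      have hαξ : α • ξ ∈ s.toSubmodule ⊓ Submodule.span ℝ {ξ} := by
        constructor
        · have : α • ξ = (hbs hY |> fun h => Y) + α • Z - (Y + α • (Z - ξ)) := by
            simp; module
          rw [this]
          exact Submodule.sub_mem _ (Submodule.add_mem _ (hbs hY)
            (Submodule.smul_mem _ _ hZs)) hXs
        · exact Submodule.smul_mem _ _ (Submodule.mem_span_singleton_self _)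
      rw [hdisj, Submodule.mem_bot] at hαξ
      rcases smul_eq_zero.mp hαξ with h | h
      · subst h; simpa using hY
      · exact absurd h hξne
    · intro X hX
      exact ⟨hbs hX, (hmem X).mpr ⟨X, hX, 0, by simp⟩⟩
end
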